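/- Any two closed discs are compatible: For all x, y ∈ ℂ and all r, s > 0, the set {z : |z − y| ≤ s} \ {z : |z − x| < r} (the closed disc around y with the open disc around x removed) is a preconnected subset of ℂ. -/

import Mathlib

/-!
After an isometry of `ℂ` we may assume `x = 0` and `y = d ≥ 0` real. Rotating a point of
`closedBall d s \ ball 0 r` about `0` towards the positive real axis keeps its modulus and
only decreases its distance to `d`, so every point is joined, inside the set, to the real
segment `[max r (d - s), d + s]`, which lies in the set.
-/

open Complex Set Metric

theorem isPreconnected_of_forall_exists_inter_nonempty {α : Type*} [TopologicalSpace α]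
    {s a : Set α} (ha : IsPreconnected a) (has : a ⊆ s)
    (H : ∀ z ∈ s, ∃ t ⊆ s, z ∈ t ∧ (t ∩ a).Nonempty ∧ IsPreconnected t) :
    IsPreconnected s := by
  refine isPreconnected_of_forall_pair fun z hz w hw => ?_
  obtain ⟨t, hts, hzt, hta, ht⟩ := H z hz
  obtain ⟨u, hus, hwu, hua, hu⟩ := H w hw
  have htau : IsPreconnected (t ∪ a ∪ u) :=
    (ht.union' hta ha).union' (hua.mono fun _ h => ⟨.inr h.2, h.1⟩) hu
  exact ⟨t ∪ a ∪ u, union_subset (union_subset hts has) hus, .inl (.inl hzt), .inr hwu, htau⟩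

theorem norm_ofReal_mul_exp_sub_ofReal_sq (ρ θ d : ℝ) :
    ‖(ρ : ℂ) * exp (θ * I) - d‖ ^ 2 = ρ ^ 2 - 2 * ρ * d * Real.cos θ + d ^ 2 := by
  rw [Complex.sq_norm, normSq_apply, exp_mul_I, ← ofReal_cos, ← ofReal_sin]
  simp only [sub_re, sub_im, mul_re, mul_im, add_re, add_im, ofReal_re, ofReal_im, I_re, I_im]
  linear_combination ρ ^ 2 * Real.sin_sq_add_cos_sq θ

theorem norm_ofReal_mul_exp_sub_ofReal_le {ρ d φ θ : ℝ} (hρ : 0 ≤ ρ) (hd : 0 ≤ d)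
    (hφθ : |φ| ≤ |θ|) (hθ : |θ| ≤ Real.pi) :
    ‖(ρ : ℂ) * exp (φ * I) - d‖ ≤ ‖(ρ : ℂ) * exp (θ * I) - d‖ := by
  have hcos : Real.cos θ ≤ Real.cos φ := by
    rw [← Real.cos_abs φ, ← Real.cos_abs θ]
    exact Real.cos_le_cos_of_nonneg_of_le_pi (abs_nonneg φ) hθ hφθ
  rw [← sq_le_sq₀ (norm_nonneg _) (norm_nonneg _), norm_ofReal_mul_exp_sub_ofReal_sq,
    norm_ofReal_mul_exp_sub_ofReal_sq]
  nlinarith [mul_nonneg hρ hd]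

theorem norm_mul_exp_mul_I_mem_closedBall_diff_ball_zero {d r s : ℝ} (hd : 0 ≤ d) {z : ℂ}
    (hz : z ∈ closedBall (d : ℂ) s \ ball 0 r) {φ : ℝ} (hφ : φ ∈ uIcc 0 (arg z)) :
    (‖z‖ : ℂ) * exp (φ * I) ∈ closedBall (d : ℂ) s \ ball 0 r := by
  obtain ⟨hzs, hzr⟩ := hz
  have hφθ : |φ| ≤ |arg z| := by simpa using abs_sub_left_of_mem_uIcc hφ
  refine ⟨?_, by simpa [norm_exp_ofReal_mul_I] using hzr⟩
  rw [mem_closedBall, dist_eq] at hzs ⊢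
  calc ‖(‖z‖ : ℂ) * exp (φ * I) - d‖ ≤ ‖(‖z‖ : ℂ) * exp (arg z * I) - d‖ :=
        norm_ofReal_mul_exp_sub_ofReal_le (norm_nonneg z) hd hφθ (abs_arg_le_pi z)
    _ = ‖z - d‖ := by rw [norm_mul_exp_arg_mul_I]
    _ ≤ s := hzs

theorem isPreconnected_closedBall_ofReal_diff_ball_zero {d : ℝ} (hd : 0 ≤ d) (r s : ℝ) :
    IsPreconnected (closedBall (d : ℂ) s \ ball 0 r) := by
  refine isPreconnected_of_forall_exists_inter_nonempty
    (a := ofReal '' Icc (max r (d - s)) (d + s))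
    (isPreconnected_Icc.image ofReal continuous_ofReal.continuousOn) ?_ fun z hz => ?_
  · rintro _ ⟨ρ, ⟨hρ₁, hρ₂⟩, rfl⟩
    simp only [max_le_iff] at hρ₁
    simp only [mem_sdiff, mem_closedBall, mem_ball, dist_eq, ← ofReal_sub, norm_real,
      Real.norm_eq_abs, sub_zero, not_lt, abs_le]
    exact ⟨⟨by linarith, by linarith⟩, hρ₁.1.trans (le_abs_self ρ)⟩
  have hz_mem : ‖z‖ ∈ Icc (max r (d - s)) (d + s) := by
    have hzr : r ≤ ‖z‖ := by simpa using hz.2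
    have hz_d := abs_le.mp ((abs_norm_sub_norm_le z d).trans (mem_closedBall_iff_norm.mp hz.1))
    rw [norm_real, Real.norm_of_nonneg hd] at hz_d
    exact ⟨max_le hzr (by linarith), by linarith⟩
  refine ⟨(fun φ : ℝ => (‖z‖ : ℂ) * exp (φ * I)) '' uIcc 0 (arg z), ?_,
    ⟨arg z, right_mem_uIcc, norm_mul_exp_arg_mul_I z⟩,
    ⟨‖z‖, ⟨0, left_mem_uIcc, by simp⟩, ‖z‖, hz_mem, rfl⟩,
    isPreconnected_uIcc.image _ (by fun_prop)⟩
  rintro _ ⟨φ, hφ, rfl⟩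
  exact norm_mul_exp_mul_I_mem_closedBall_diff_ball_zero hd hz hφ

theorem closedBall_diff_ball_isPreconnected_general (x y : ℂ) (r s : ℝ) :
    IsPreconnected (Metric.closedBall y s \ Metric.ball x r) := by
  let e : ℂ ≃ᵢ ℂ :=
    (rotation (Circle.exp (arg (y - x)))).toIsometryEquiv.trans (IsometryEquiv.addLeft x)
  have he (w : ℂ) : e w = x + exp (arg (y - x) * I) * w := rfl
  have hS : e '' (closedBall (‖y - x‖ : ℂ) s \ ball 0 r) = closedBall y s \ ball x r := by
    rw [image_sdiff e.injective, e.image_closedBall, e.image_ball, he, he, mul_comm,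
      norm_mul_exp_arg_mul_I, mul_zero, add_zero, add_sub_cancel]
  rw [← hS]
  exact (isPreconnected_closedBall_ofReal_diff_ball_zero (norm_nonneg _) r s).image e
    e.continuous.continuousOn

/-- Any two closed discs are compatible: a closed disc with an open disc removed is
preconnected. -/
theorem closedBall_diff_ball_isPreconnected (x y : ℂ) (r s : ℝ)
    (hr : 0 < r) (hs : 0 < s) :
    IsPreconnected (Metric.closedBall y s \ Metric.ball x r) :=
  closedBall_diff_ball_isPreconnected_general x y r s
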